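/- For a connected small category C, the Lusternik–Schnirelmann category satisfies ccat(C) ≤ cTC(C), where cTC(C) = cD(p₁,p₂) for the projections p₁, p₂ : C × C → C. -/

import Mathlib

open CategoryTheory

universe v₁ v₂ v₃ u₁ u₂ u₃

/-- A subcategory of `C`: a set of objects and sets of arrows closed under identities and
composition, whose arrows have source and target in the subcategory. -/
structure Subcat (C : Type u₁) [Category.{v₁} C] where
  objs : Set C
  homs : ∀ x y : C, Set (x ⟶ y)
  id_mem : ∀ {x : C}, x ∈ objs → 𝟙 x ∈ homs x x
  comp_mem : ∀ {x y z : C} {f : x ⟶ y} {g : y ⟶ z}, f ∈ homs x y → g ∈ homs y z → f ≫ g ∈ homs x z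
  src_mem : ∀ {x y : C} {f : x ⟶ y}, f ∈ homs x y → x ∈ objs
  tgt_mem : ∀ {x y : C} {f : x ⟶ y}, f ∈ homs x y → y ∈ objs

variable {C : Type u₁} [Category.{v₁} C]

/-- The type of objects of a subcategory. -/
def Subcat.Obj (U : Subcat C) : Type u₁ := {x : C // x ∈ U.objs}

instance (U : Subcat C) : Category U.Obj where
  Hom x y := {f : x.1 ⟶ y.1 // f ∈ U.homs x.1 y.1}
  id x := ⟨𝟙 x.1, U.id_mem x.2⟩
  comp f g := ⟨f.1 ≫ g.1, U.comp_mem f.2 g.2⟩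
  id_comp f := Subtype.ext (Category.id_comp f.1)
  comp_id f := Subtype.ext (Category.comp_id f.1)
  assoc f g h := Subtype.ext (Category.assoc f.1 g.1 h.1)

/-- The inclusion functor of a subcategory. -/
def Subcat.incl (U : Subcat C) : U.Obj ⥤ C where
  obj x := x.1
  map f := f.1

/-- A chain of composable arrows lies in the subcategory `U`. -/
def Subcat.ContainsChain (U : Subcat C) {m : ℕ} (c : Fin (m + 1) → C)
    (f : ∀ i : Fin m, c i.castSucc ⟶ c i.succ) : Prop :=
  (∀ i, c i ∈ U.objs) ∧ ∀ i, f i ∈ U.homs (c i.castSucc) (c i.succ)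

/-- A family of subcategories is a geometric cover if every finite chain of composable
arrows lies in some member of the family. -/
def GeometricCover {ι : Type} (U : ι → Subcat C) : Prop :=
  ∀ (m : ℕ) (c : Fin (m + 1) → C) (f : ∀ i : Fin m, c i.castSucc ⟶ c i.succ),
    ∃ i : ι, (U i).ContainsChain c f

/-- Two functors are homotopic if they are connected by a finite zigzag of natural
transformations. -/
def Homotopic {A : Type u₂} {B : Type u₃} [Category.{v₂} A] [Category.{v₃} B]
    (F G : A ⥤ B) : Prop :=
  Zigzag F G

variable {D : Type u₂} [Category.{v₂} D]

/-- `C` admits a geometric cover by `n + 1` homotopy domains for `F` and `G`. -/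
def DistLE (n : ℕ) (F G : C ⥤ D) : Prop :=
  ∃ U : Fin (n + 1) → Subcat C, GeometricCover U ∧
    ∀ i, Homotopic ((U i).incl ⋙ F) ((U i).incl ⋙ G)

/-- The homotopic distance between two functors, as an extended natural number. -/
noncomputable def cD (F G : C ⥤ D) : ℕ∞ :=
  sInf {n : ℕ∞ | ∃ m : ℕ, n = (m : ℕ∞) ∧ DistLE m F G}

/-- The categorical complexity of `C`: the homotopic distance between the projections. -/
noncomputable def cTC (A : Type u₂) [Category.{v₂} A] : ℕ∞ :=
  cD (CategoryTheory.Prod.fst A A) (CategoryTheory.Prod.snd A A)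

/-- The (normalized) Lusternik–Schnirelmann category of a small category: the least `n`
such that `C` admits a geometric cover by `n + 1` subcategories whose inclusions are
homotopic to constant functors. -/
noncomputable def ccat (A : Type u₂) [Category.{v₂} A] : ℕ∞ :=
  sInf {n : ℕ∞ | ∃ m : ℕ, n = (m : ℕ∞) ∧
    ∃ U : Fin (m + 1) → Subcat A, GeometricCover U ∧
      ∀ i, ∃ a : A, Homotopic ((U i).incl) ((Functor.const (U i).Obj).obj a)}

namespace Subcat

variable (H : C ⥤ D)

def comap (U : Subcat D) : Subcat C where
  objs := H.obj ⁻¹' U.objs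
  homs x y := H.map ⁻¹' U.homs (H.obj x) (H.obj y)
  id_mem hx := by simpa only [Set.mem_preimage, H.map_id] using U.id_mem hx
  comp_mem hf hg := by simpa only [Set.mem_preimage, H.map_comp] using U.comp_mem hf hg
  src_mem hf := U.src_mem hf
  tgt_mem hf := U.tgt_mem hf

-- `(U.comap H).incl ⋙ H` and `U.comapRestrict H ⋙ U.incl` agree definitionally.
def comapRestrict (U : Subcat D) : (U.comap H).Obj ⥤ U.Obj where
  obj x := ⟨H.obj x.1, x.2⟩
  map f := ⟨H.map f.1, f.2⟩
  map_id x := Subtype.ext (H.map_id x.1)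
  map_comp f g := Subtype.ext (H.map_comp f.1 g.1)

end Subcat

theorem GeometricCover.comap {ι : Type} {U : ι → Subcat D} (hU : GeometricCover U)
    (H : C ⥤ D) : GeometricCover fun i => (U i).comap H :=
  fun m c f => hU m (fun j => H.obj (c j)) (fun j => H.map (f j))

theorem Homotopic.whiskerLeft {B : Type u₃} [Category.{v₃} B] {F G : D ⥤ B}
    (h : Homotopic F G) (H : C ⥤ D) : Homotopic (H ⋙ F) (H ⋙ G) :=
  zigzag_obj_of_zigzag ((Functor.whiskeringLeft _ _ _).obj H) h

theorem DistLE.comp_left {B : Type u₃} [Category.{v₃} B] {n : ℕ} {F G : D ⥤ B}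
    (h : DistLE n F G) (H : C ⥤ D) : DistLE n (H ⋙ F) (H ⋙ G) := by
  obtain ⟨U, hcov, hhom⟩ := h
  exact ⟨fun i => (U i).comap H, hcov.comap H,
    fun i => (hhom i).whiskerLeft ((U i).comapRestrict H)⟩

theorem cD_comp_left_le {B : Type u₃} [Category.{v₃} B] (H : C ⥤ D) (F G : D ⥤ B) :
    cD (H ⋙ F) (H ⋙ G) ≤ cD F G := by
  apply sInf_le_sInf
  rintro n ⟨m, rfl, h⟩
  exact ⟨m, rfl, h.comp_left H⟩

theorem ccat_le_cD_id_const (A : Type u₂) [Category.{v₂} A] (a : A) :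
    ccat A ≤ cD (𝟭 A) ((Functor.const A).obj a) := by
  apply sInf_le_sInf
  rintro n ⟨m, rfl, U, hcov, hhom⟩
  exact ⟨m, rfl, U, hcov, fun i => ⟨a, hhom i⟩⟩

/-- For a connected small category, `ccat(C) ≤ cTC(C)`. -/
theorem ccat_le_cTC (A : Type u₂) [Category.{v₂} A] [IsConnected A] :
    ccat A ≤ cTC A := by
  obtain ⟨a₀⟩ : Nonempty A := inferInstance
  let i₁ : A ⥤ A × A := (𝟭 A).prod' ((Functor.const A).obj a₀)
  calc ccat A ≤ cD (𝟭 A) ((Functor.const A).obj a₀) := ccat_le_cD_id_const A a₀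
    _ = cD (i₁ ⋙ CategoryTheory.Prod.fst A A) (i₁ ⋙ CategoryTheory.Prod.snd A A) := rfl
    _ ≤ cTC A := cD_comp_left_le i₁ _ _
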